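/- Let (R, m) be a Noetherian local ring, M a finite R-module of dimension d > 0, and x = x_1,...,x_r an amenable partial system of parameters of M that is a d-sequence relative to M. Then x is an M-regular sequence if and only if j_1(x; M) = j_2(x; M) = ... = j_r(x; M) = 0. -/

import Mathlib

noncomputable section

open RingTheory

universe u v

/-- The colon `(N :_M J)` of a submodule by an ideal, as a submodule of `M`. -/
def Submodule.idealColon {R : Type u} [CommRing R] {M : Type v} [AddCommGroup M] [Module R M]
    (N : Submodule R M) (J : Ideal R) : Submodule R M where
  carrier := {m | ∀ a ∈ J, a • m ∈ N}
  add_mem' := by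
    intro a b ha hb c hc
    simpa [smul_add] using N.add_mem (ha c hc) (hb c hc)
  zero_mem' := by intro a _; simp
  smul_mem' := by
    intro r m hm a ha
    rw [smul_comm]
    exact N.smul_mem r (hm a ha)

/-- The saturation `N :_M ⟨J⟩ = ⋃_ℓ (N :_M J^ℓ)`. -/
def Submodule.sat {R : Type u} [CommRing R] {M : Type v} [AddCommGroup M] [Module R M]
    (N : Submodule R M) (J : Ideal R) : Submodule R M :=
  ⨆ ℓ : ℕ, N.idealColon (J ^ ℓ)

/-- `H^0_J(M)`, the `J`-power torsion submodule of `M`. -/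
def tor (R : Type u) [CommRing R] (J : Ideal R) (M : Type v) [AddCommGroup M] [Module R M] :
    Submodule R M :=
  (⊥ : Submodule R M).sat J

/-- Krull dimension of a module, `dim (R / ann M)`. -/
def mdim (R : Type u) [CommRing R] (M : Type v) [AddCommGroup M] [Module R M] : WithBot ℕ∞ :=
  ringKrullDim (R ⧸ Module.annihilator R M)

/-- Length of a module, as the longest chain in its submodule lattice. -/
def elen (R : Type u) [CommRing R] (M : Type v) [AddCommGroup M] [Module R M] : ℕ∞ :=
  WithBot.unbotD 0 (Order.krullDim (Submodule R M))

/-- Length of a module as a natural number. -/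
def nlen (R : Type u) [CommRing R] (M : Type v) [AddCommGroup M] [Module R M] : ℕ :=
  (elen R M).toNat

/-- The ideal generated by `x_1, …, x_{i}` (the first `i` entries of `x`). -/
def priorIdeal {R : Type u} [CommRing R] {n : ℕ} (x : Fin n → R) (i : ℕ) : Ideal R :=
  Ideal.span (x '' {k : Fin n | (k : ℕ) < i})

/-- `x_1, …, x_n` is a d-sequence relative to `M`:
`(x_1,…,x_{i-1})M :_M x_i x_j = (x_1,…,x_{i-1})M :_M x_j` for all `i ≤ j`. -/
def IsDSeq {R : Type u} [CommRing R] (M : Type v) [AddCommGroup M] [Module R M]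
    {n : ℕ} (x : Fin n → R) : Prop :=
  ∀ i j : Fin n, i ≤ j →
    Submodule.comap (LinearMap.lsmul R M (x i * x j)) (priorIdeal x i • ⊤) =
    Submodule.comap (LinearMap.lsmul R M (x j)) (priorIdeal x i • ⊤)

/-- Degree-`j` term of the Koszul complex of `x_1, …, x_n` with coefficients in `M`. -/
abbrev KC (R : Type u) [CommRing R] (M : Type v) [AddCommGroup M] [Module R M] (n j : ℕ) :
    Type v :=
  {s : Finset (Fin n) // s.card = j} → M

/-- Koszul sign. -/
def koszulSign {n : ℕ} (T : Finset (Fin n)) (i : Fin n) : ℤ :=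
  (-1 : ℤ) ^ (T.filter (fun k => k < i)).card

/-- The Koszul differential `K_{j+1}(x; M) → K_j(x; M)`. -/
def kd (R : Type u) [CommRing R] (M : Type v) [AddCommGroup M] [Module R M]
    {n : ℕ} (x : Fin n → R) (j : ℕ) : KC R M n (j + 1) →ₗ[R] KC R M n j where
  toFun f T := ∑ i : Fin n,
    if h : i ∈ T.val then 0
    else koszulSign T.val i •
      (x i • f ⟨insert i T.val, by rw [Finset.card_insert_of_notMem h, T.property]⟩)
  map_add' f g := by
    funext T
    show (∑ i : Fin n, _) = (∑ i : Fin n, _) + (∑ i : Fin n, (_ : M))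
    rw [← Finset.sum_add_distrib]
    refine Finset.sum_congr rfl fun i _ => ?_
    by_cases h : i ∈ T.val <;> simp [h, smul_add]
  map_smul' r f := by
    funext T
    show (∑ i : Fin n, _) = r • (∑ i : Fin n, (_ : M))
    rw [Finset.smul_sum]
    refine Finset.sum_congr rfl fun i _ => ?_
    by_cases h : i ∈ T.val
    · simp [h]
    · simp only [h, dif_neg, not_false_iff, Pi.smul_apply]
      rw [smul_comm (x i) r, smul_comm (koszulSign T.val i) r]

/-- The Koszul homology module `H_{j+1}(x; M)` (so `KH M x j` is the `(j+1)`-st homology;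
these are exactly the positive-degree Koszul homology modules). -/
abbrev KH (R : Type u) [CommRing R] (M : Type v) [AddCommGroup M] [Module R M]
    {n : ℕ} (x : Fin n → R) (j : ℕ) :=
  LinearMap.ker (kd R M x j) ⧸
    (Submodule.comap (LinearMap.ker (kd R M x j)).subtype (LinearMap.range (kd R M x (j + 1))))

/-- Restriction of `x` to its first `i` entries. -/
def firstk {R : Type u} [CommRing R] {n : ℕ} (x : Fin n → R) (i : ℕ) (h : i ≤ n) :
    Fin i → R :=
  fun k => x (Fin.castLE h k)

/-- `x` is a proper sequence relative to `M` : `x_{i+1} H_j(x_1,…,x_i; M) = 0`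
for `1 ≤ i < n` and `j > 0`. -/
def IsProperSeq {R : Type u} [CommRing R] (M : Type v) [AddCommGroup M] [Module R M]
    {n : ℕ} (x : Fin n → R) : Prop :=
  ∀ i : ℕ, 1 ≤ i → ∀ hi : i < n, ∀ j : ℕ,
    ∀ h : KH R M (firstk x i hi.le) j, x ⟨i, hi⟩ • h = 0

/-- `x` is amenable to `M` : the positive Koszul homology modules have finite length. -/
def IsAmenable (R : Type u) [CommRing R] (M : Type u) [AddCommGroup M] [Module R M]
    {n : ℕ} (x : Fin n → R) : Prop :=
  ∀ j : ℕ, IsFiniteLength R (KH R M x j)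

/-- `x` is a partial system of parameters of `M` : `dim M = n + dim M/(x)M`. -/
def IsPartialSOP (R : Type u) [CommRing R] (M : Type v) [AddCommGroup M] [Module R M]
    {n : ℕ} (x : Fin n → R) : Prop :=
  mdim R M = (n : WithBot ℕ∞) +
    mdim R (M ⧸ (Ideal.span (Set.range x) • ⊤ : Submodule R M))

/-- `x` is a system of parameters of `M`. -/
def IsSOP (R : Type u) [CommRing R] (M : Type v) [AddCommGroup M] [Module R M]
    {n : ℕ} (x : Fin n → R) : Prop :=
  mdim R M = (n : WithBot ℕ∞) ∧
    IsFiniteLength R (M ⧸ (Ideal.span (Set.range x) • ⊤ : Submodule R M))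

/-- There is an `M`-regular sequence of length `k` inside the set `J` (depth `≥ k`). -/
def hasDepthGE (R : Type u) [CommRing R] (J : Set R) (M : Type v) [AddCommGroup M]
    [Module R M] (k : ℕ) : Prop :=
  ∃ y : Fin k → R, (∀ i, y i ∈ J) ∧ RingTheory.Sequence.IsRegular M (List.ofFn y)

/-- The degree-`ℓ` piece `I^ℓ M / I^{ℓ+1} M` of the associated graded module. -/
abbrev grPiece (R : Type u) [CommRing R] (I : Ideal R) (M : Type v) [AddCommGroup M]
    [Module R M] (ℓ : ℕ) :=
  (I ^ ℓ • ⊤ : Submodule R M) ⧸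
    (Submodule.comap (I ^ ℓ • ⊤ : Submodule R M).subtype (I ^ (ℓ + 1) • ⊤ : Submodule R M))

/-- The j-function `n ↦ Σ_{ℓ ≤ n} λ(H^0_J(I^ℓ M / I^{ℓ+1} M))`. -/
def jFun (R : Type u) [CommRing R] (J I : Ideal R) (M : Type v) [AddCommGroup M]
    [Module R M] (n : ℕ) : ℕ :=
  ∑ ℓ ∈ Finset.range (n + 1), nlen R (tor R J (grPiece R I M ℓ))

end

noncomputable section KoszulInfra
open Finset

variable {R : Type u} [CommRing R] {M : Type v} [AddCommGroup M] [Module R M]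

section Basic
variable {n : ℕ}

lemma KC_index_zero_eq (T : {s : Finset (Fin n) // s.card = 0}) :
    T = ⟨∅, Finset.card_empty⟩ :=
  Subtype.ext (Finset.card_eq_zero.mp T.2)

/-- Evaluation of a degree-0 Koszul chain at the empty set. -/
def ev : KC R M n 0 →ₗ[R] M := LinearMap.proj ⟨∅, Finset.card_empty⟩

lemma ev_inj : Function.Injective (ev : KC R M n 0 →ₗ[R] M) := by
  intro F G h
  funext T
  rw [KC_index_zero_eq T]
  exact h

lemma koszulSign_empty (i : Fin n) : koszulSign (∅ : Finset (Fin n)) i = 1 := by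
  simp [koszulSign]

lemma ev_kd (x : Fin n → R) (F : KC R M n 1) :
    ev (kd R M x 0 F) = ∑ i, x i • F ⟨{i}, Finset.card_singleton i⟩ := by
  show (∑ i : Fin n, _) = _
  refine Finset.sum_congr rfl fun i _ => ?_
  rw [dif_neg (Finset.notMem_empty i)]
  rw [koszulSign_empty, one_smul]
  congr 1

lemma mem_span_smul_top_iff {x : Fin n → R} {m : M} :
    m ∈ (Ideal.span (Set.range x) • ⊤ : Submodule R M) ↔
      ∃ u : Fin n → M, ∑ i, x i • u i = m := by
  constructor
  · intro hm
    refine Submodule.smul_induction_on hm ?_ ?_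
    · intro r hr mm _
      obtain ⟨c, hc⟩ := (Submodule.mem_span_range_iff_exists_fun R).mp hr
      refine ⟨fun i => c i • mm, ?_⟩
      rw [← hc, Finset.sum_smul]
      refine Finset.sum_congr rfl fun i _ => ?_
      rw [smul_smul, smul_eq_mul, mul_comm]
    · rintro m₁ m₂ ⟨u₁, hu₁⟩ ⟨u₂, hu₂⟩
      exact ⟨u₁ + u₂, by simp [smul_add, Finset.sum_add_distrib, hu₁, hu₂]⟩
  · rintro ⟨u, rfl⟩
    exact Submodule.sum_mem _ fun i _ =>
      Submodule.smul_mem_smul (Ideal.subset_span ⟨i, rfl⟩) Submodule.mem_top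

lemma ev_kd_mem (x : Fin n → R) (F : KC R M n 1) :
    ev (kd R M x 0 F) ∈ (Ideal.span (Set.range x) • ⊤ : Submodule R M) := by
  rw [ev_kd]
  exact mem_span_smul_top_iff.mpr ⟨_, rfl⟩

lemma exists_kd_zero_eq {x : Fin n → R} {b : KC R M n 0}
    (hb : ev b ∈ (Ideal.span (Set.range x) • ⊤ : Submodule R M)) :
    ∃ F : KC R M n 1, kd R M x 0 F = b := by
  obtain ⟨u, hu⟩ := mem_span_smul_top_iff.mp hb
  refine ⟨fun T => u (Finset.card_eq_one.mp T.2).choose, ev_inj ?_⟩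
  rw [ev_kd]
  rw [← hu]
  refine Finset.sum_congr rfl fun i _ => ?_
  congr 2
  have hspec := (Finset.card_eq_one.mp
    (⟨{i}, Finset.card_singleton i⟩ : {s : Finset (Fin n) // s.card = 1}).2).choose_spec
  exact (Finset.singleton_injective hspec.symm)

lemma KH_subsingleton_iff (x : Fin n → R) (j : ℕ) :
    Subsingleton (KH R M x j) ↔
      ∀ F : KC R M n (j + 1), kd R M x j F = 0 →
        F ∈ LinearMap.range (kd R M x (j + 1)) := by
  rw [Submodule.Quotient.subsingleton_iff, Submodule.comap_subtype_eq_top]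
  constructor
  · intro h F hF
    exact h (LinearMap.mem_ker.mpr hF)
  · intro h y hy
    exact h y (LinearMap.mem_ker.mp hy)

end Basic

section Decomp
variable {n : ℕ}

/-- Pull back a finset avoiding `last` along `castSucc`. -/
def pull (T : Finset (Fin (n + 1))) : Finset (Fin n) :=
  Finset.univ.filter (fun i => i.castSucc ∈ T)

lemma mem_pull {T : Finset (Fin (n + 1))} {i : Fin n} : i ∈ pull T ↔ i.castSucc ∈ T := by
  simp [pull]

lemma last_not_mem_map (S : Finset (Fin n)) :
    Fin.last n ∉ S.map Fin.castSuccEmb := by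
  simp only [Finset.mem_map, Fin.coe_castSuccEmb]
  rintro ⟨i, _, hi⟩
  exact absurd hi (ne_of_lt (Fin.castSucc_lt_last i))

lemma map_pull {T : Finset (Fin (n + 1))} (h : Fin.last n ∉ T) :
    (pull T).map Fin.castSuccEmb = T := by
  ext k
  simp only [Finset.mem_map, Fin.coe_castSuccEmb, mem_pull]
  constructor
  · rintro ⟨i, hi, rfl⟩; exact hi
  · intro hk
    have hkne : k ≠ Fin.last n := fun e => h (e ▸ hk)
    obtain ⟨i, rfl⟩ := Fin.exists_castSucc_eq.mpr hkne
    exact ⟨i, hk, rfl⟩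

lemma pull_map (S : Finset (Fin n)) : pull (S.map Fin.castSuccEmb) = S := by
  ext i
  rw [mem_pull]
  exact Finset.mem_map' Fin.castSuccEmb

lemma card_pull {T : Finset (Fin (n + 1))} (h : Fin.last n ∉ T) :
    (pull T).card = T.card := by
  rw [← map_pull h, Finset.card_map, pull_map]

/-- First component of the cone decomposition. -/
def phi (j : ℕ) : KC R M (n + 1) j →ₗ[R] KC R M n j where
  toFun F S := F ⟨S.1.map Fin.castSuccEmb, by rw [Finset.card_map]; exact S.2⟩
  map_add' _ _ := rfl
  map_smul' _ _ := rfl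

/-- Second component of the cone decomposition. -/
def psi (j : ℕ) : KC R M (n + 1) (j + 1) →ₗ[R] KC R M n j where
  toFun F S := F ⟨insert (Fin.last n) (S.1.map Fin.castSuccEmb), by
    rw [Finset.card_insert_of_notMem (last_not_mem_map S.1), Finset.card_map, S.2]⟩
  map_add' _ _ := rfl
  map_smul' _ _ := rfl

/-- Reassemble a chain from its two components. -/
def bld (j : ℕ) (a : KC R M n (j + 1)) (b : KC R M n j) : KC R M (n + 1) (j + 1) :=
  fun T =>
    if h : Fin.last n ∈ T.1 then
      b ⟨pull (T.1.erase (Fin.last n)), by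
        rw [card_pull (Finset.notMem_erase _ _), Finset.card_erase_of_mem h, T.2]
        omega⟩
    else a ⟨pull T.1, by rw [card_pull h, T.2]⟩

lemma phi_bld (j : ℕ) (a : KC R M n (j + 1)) (b : KC R M n j) :
    phi (j + 1) (bld j a b) = a := by
  funext S
  show bld j a b _ = a S
  rw [bld, dif_neg (last_not_mem_map S.1)]
  congr 1
  exact Subtype.ext (pull_map S.1)

lemma psi_bld (j : ℕ) (a : KC R M n (j + 1)) (b : KC R M n j) :
    psi j (bld j a b) = b := by
  funext S
  show bld j a b _ = b S
  rw [bld, dif_pos (Finset.mem_insert_self _ _)]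
  congr 1
  refine Subtype.ext ?_
  show pull ((insert (Fin.last n) (S.1.map Fin.castSuccEmb)).erase (Fin.last n)) = S.1
  rw [Finset.erase_insert (last_not_mem_map S.1), pull_map]

lemma bld_ext (j : ℕ) (F : KC R M (n + 1) (j + 1)) :
    bld j (phi (j + 1) F) (psi j F) = F := by
  funext T
  by_cases h : Fin.last n ∈ T.1
  · rw [bld, dif_pos h]
    show F _ = F T
    congr 1
    refine Subtype.ext ?_
    show insert (Fin.last n) ((pull (T.1.erase (Fin.last n))).map Fin.castSuccEmb) = T.1
    rw [map_pull (Finset.notMem_erase _ _), Finset.insert_erase h]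
  · rw [bld, dif_neg h]
    show F _ = F T
    congr 1
    exact Subtype.ext (map_pull h)

lemma phi_zero_inj : Function.Injective (phi 0 : KC R M (n + 1) 0 →ₗ[R] KC R M n 0) := by
  intro F G h
  funext T
  rw [KC_index_zero_eq T]
  have := congrFun h ⟨∅, Finset.card_empty⟩
  simpa [phi, Finset.map_empty] using this

lemma koszulSign_map (S : Finset (Fin n)) (i : Fin n) :
    koszulSign (S.map Fin.castSuccEmb) i.castSucc = koszulSign S i := by
  unfold koszulSign
  congr 1
  rw [show (S.map Fin.castSuccEmb).filter (fun k => k < i.castSucc)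
      = (S.filter (fun k => k < i)).map Fin.castSuccEmb by
    ext k
    simp only [Finset.mem_filter, Finset.mem_map, Fin.coe_castSuccEmb]
    constructor
    · rintro ⟨⟨a, ha, rfl⟩, hlt⟩
      exact ⟨a, ⟨ha, by rwa [Fin.castSucc_lt_castSucc_iff] at hlt⟩, rfl⟩
    · rintro ⟨a, ⟨ha, hlt⟩, rfl⟩
      exact ⟨⟨a, ha, rfl⟩, by rwa [Fin.castSucc_lt_castSucc_iff]⟩]
  rw [Finset.card_map]

lemma koszulSign_insert_last (S : Finset (Fin n)) (i : Fin n) :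
    koszulSign (insert (Fin.last n) (S.map Fin.castSuccEmb)) i.castSucc
      = koszulSign S i := by
  unfold koszulSign
  rw [Finset.filter_insert, if_neg (by
    simp only [not_lt]
    exact le_of_lt (Fin.castSucc_lt_last i))]
  have := koszulSign_map S i
  unfold koszulSign at this
  have hcard := congrArg (fun z : ℤ => z) this
  -- reuse filter equality via cards
  exact this ▸ rfl

lemma koszulSign_last (S : Finset (Fin n)) :
    koszulSign (S.map Fin.castSuccEmb) (Fin.last n) = (-1 : ℤ) ^ S.card := by
  unfold koszulSign
  rw [Finset.filter_true_of_mem, Finset.card_map]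
  intro k hk
  obtain ⟨a, _, rfl⟩ := Finset.mem_map.mp hk
  exact Fin.castSucc_lt_last a

lemma phi_kd (x : Fin (n + 1) → R) (j : ℕ) (F : KC R M (n + 1) (j + 1)) :
    phi j (kd R M x j F) =
      kd R M (fun i => x i.castSucc) j (phi (j + 1) F) +
        ((-1 : ℤ) ^ j) • (x (Fin.last n) • psi j F) := by
  funext S
  show kd R M x j F ⟨S.1.map Fin.castSuccEmb, _⟩ = _
  show (∑ i : Fin (n + 1), _) = _
  rw [Fin.sum_univ_castSucc]
  congr 1
  · -- sum over Fin n equals kd x' of phi F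
    show _ = kd R M (fun i => x i.castSucc) j (phi (j + 1) F) S
    show _ = (∑ i : Fin n, _)
    refine Finset.sum_congr rfl fun i _ => ?_
    by_cases h : i ∈ S.1
    · rw [dif_pos (show i.castSucc ∈ S.1.map Fin.castSuccEmb from
        (Finset.mem_map' Fin.castSuccEmb).mpr h), dif_pos h]
    · rw [dif_neg (show i.castSucc ∉ S.1.map Fin.castSuccEmb from
        fun hh => h ((Finset.mem_map' Fin.castSuccEmb).mp hh)), dif_neg h]
      rw [koszulSign_map]
      congr 2
      show F _ = phi (j + 1) F ⟨insert i S.1, _⟩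
      show F _ = F _
      congr 1
      refine Subtype.ext ?_
      show insert i.castSucc (S.1.map Fin.castSuccEmb) = (insert i S.1).map Fin.castSuccEmb
      rw [Finset.map_insert]
      rfl
  · -- last term
    rw [dif_neg (last_not_mem_map S.1)]
    rw [koszulSign_last, S.2]
    show _ = ((-1 : ℤ) ^ j) • (x (Fin.last n) • psi j F S)
    rfl

lemma psi_kd (x : Fin (n + 1) → R) (j : ℕ) (F : KC R M (n + 1) (j + 2)) :
    psi j (kd R M x (j + 1) F) = kd R M (fun i => x i.castSucc) j (psi (j + 1) F) := by
  funext S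
  show kd R M x (j + 1) F ⟨insert (Fin.last n) (S.1.map Fin.castSuccEmb), _⟩ = _
  show (∑ i : Fin (n + 1), _) = _
  rw [Fin.sum_univ_castSucc]
  have hlast : Fin.last n ∈ insert (Fin.last n) (S.1.map Fin.castSuccEmb) :=
    Finset.mem_insert_self _ _
  rw [dif_pos hlast, add_zero]
  show _ = (∑ i : Fin n, _)
  refine Finset.sum_congr rfl fun i _ => ?_
  have hmem : i.castSucc ∈ insert (Fin.last n) (S.1.map Fin.castSuccEmb) ↔ i ∈ S.1 := by
    rw [Finset.mem_insert]
    constructor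
    · rintro (h | h)
      · exact absurd h (ne_of_lt (Fin.castSucc_lt_last i))
      · exact (Finset.mem_map' Fin.castSuccEmb).mp h
    · intro h
      exact Or.inr ((Finset.mem_map' Fin.castSuccEmb).mpr h)
  by_cases h : i ∈ S.1
  · rw [dif_pos (hmem.mpr h), dif_pos h]
  · rw [dif_neg (fun hh => h (hmem.mp hh)), dif_neg h]
    rw [koszulSign_insert_last]
    congr 2
    show F _ = psi (j + 1) F ⟨insert i S.1, _⟩
    show F _ = F _
    congr 1
    refine Subtype.ext ?_
    show insert i.castSucc (insert (Fin.last n) (S.1.map Fin.castSuccEmb))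
      = insert (Fin.last n) ((insert i S.1).map Fin.castSuccEmb)
    rw [Finset.map_insert, Finset.insert_comm]
    rfl

end Decomp

section Core
variable {n : ℕ}

lemma KC_zero_subsingleton (j : ℕ) : Subsingleton (KC R M 0 (j + 1)) := by
  refine ⟨fun F G => funext fun T => ?_⟩
  have h1 : T.1 = ∅ := Finset.eq_empty_of_isEmpty T.1
  have := T.2
  rw [h1] at this
  simp at this

lemma bld_zero (j : ℕ) : bld j (0 : KC R M n (j + 1)) (0 : KC R M n j) = 0 := by
  funext T
  rw [bld]
  by_cases h : Fin.last n ∈ T.1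
  · rw [dif_pos h]; rfl
  · rw [dif_neg h]; rfl

lemma kd_kd : ∀ {n : ℕ} (x : Fin n → R) (j : ℕ) (F : KC R M n (j + 2)),
    kd R M x j (kd R M x (j + 1) F) = 0 := by
  intro n
  induction n with
  | zero =>
    intro x j F
    have := KC_zero_subsingleton (R := R) (M := M) j
    have h0 : kd R M x (j + 1) F = 0 := Subsingleton.elim _ _
    rw [h0, map_zero]
  | succ n ih =>
    intro x j F
    set x' : Fin n → R := fun i => x i.castSucc with hx'
    have hphi : phi j (kd R M x j (kd R M x (j + 1) F)) = 0 := by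
      rw [phi_kd, phi_kd, map_add, map_zsmul, map_smul, ih, psi_kd]
      set w : KC R M n j := x (Fin.last n) • kd R M x' j (psi (j + 1) F) with hw
      rw [zero_add]
      show ((-1 : ℤ) ^ (j + 1)) • w + ((-1 : ℤ) ^ j) • w = 0
      rw [← add_zsmul]
      have : ((-1 : ℤ) ^ (j + 1) + (-1 : ℤ) ^ j) = 0 := by
        rw [pow_succ]; ring
      rw [this, zero_smul]
    cases j with
    | zero =>
      apply phi_zero_inj
      rw [hphi, map_zero]
    | succ j'' =>
      have hpsi : psi j'' (kd R M x (j'' + 1) (kd R M x (j'' + 2) F)) = 0 := by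
        rw [psi_kd, psi_kd, ih]
      have := bld_ext j'' (kd R M x (j'' + 1) (kd R M x (j'' + 2) F))
      rw [← this, hphi, hpsi, bld_zero]

lemma cycle_is_boundary (x : Fin (n + 1) → R) (j : ℕ)
    (hIH : ∀ f : KC R M n (j + 1), kd R M (fun i => x i.castSucc) j f = 0 →
      f ∈ LinearMap.range (kd R M (fun i => x i.castSucc) (j + 1)))
    (F : KC R M (n + 1) (j + 1)) (hF : kd R M x j F = 0)
    (hb : psi j F ∈ LinearMap.range (kd R M (fun i => x i.castSucc) j)) :
    F ∈ LinearMap.range (kd R M x (j + 1)) := by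
  set x' : Fin n → R := fun i => x i.castSucc with hx'
  obtain ⟨u, hu⟩ := hb
  set G : KC R M (n + 1) (j + 2) := bld (j + 1) 0 u with hG
  have hpsiG : psi j (kd R M x (j + 1) G) = psi j F := by
    rw [psi_kd, hG, psi_bld, hu]
  set F' : KC R M (n + 1) (j + 1) := F - kd R M x (j + 1) G with hF'
  have hpsiF' : psi j F' = 0 := by rw [hF', map_sub, hpsiG, sub_self]
  have hF'c : kd R M x j F' = 0 := by
    rw [hF', map_sub, hF, kd_kd, sub_self]
  have ha1 : kd R M x' j (phi (j + 1) F') = 0 := by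
    have := congrArg (phi j) hF'c
    rw [phi_kd, hpsiF', smul_zero, smul_zero, add_zero, map_zero] at this
    exact this
  obtain ⟨v, hv⟩ := hIH (phi (j + 1) F') ha1
  set H : KC R M (n + 1) (j + 2) := bld (j + 1) v 0 with hH
  have h1 : phi (j + 1) (kd R M x (j + 1) H) = phi (j + 1) F' := by
    rw [phi_kd, hH, phi_bld, psi_bld, smul_zero, smul_zero, add_zero, hv]
  have h2 : psi j (kd R M x (j + 1) H) = psi j F' := by
    rw [psi_kd, hH, psi_bld, map_zero, hpsiF']
  have hkdH : kd R M x (j + 1) H = F' := by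
    rw [← bld_ext j (kd R M x (j + 1) H), h1, h2, bld_ext]
  exact ⟨G + H, by rw [map_add, hkdH, hF']; abel⟩

end Core

section MainInduction
open RingTheory.Sequence

lemma ofList_ofFn {k : ℕ} (x : Fin k → R) :
    Ideal.ofList (List.ofFn x) = Ideal.span (Set.range x) := by
  unfold Ideal.ofList
  congr 1
  ext a
  simp [List.mem_ofFn]

lemma isSMulRegular_quotient_iff {p : Submodule R M} {a : R} :
    IsSMulRegular (M ⧸ p) a ↔ ∀ m : M, a • m ∈ p → m ∈ p := by
  constructor
  · intro h m hm
    have h1 : a • (Submodule.Quotient.mk (p := p) m) = a • (0 : M ⧸ p) := by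
      rw [smul_zero, ← Submodule.Quotient.mk_smul, Submodule.Quotient.mk_eq_zero]
      exact hm
    have := h h1
    rwa [Submodule.Quotient.mk_eq_zero] at this
  · intro h q1 q2 hq
    obtain ⟨m1, rfl⟩ := Submodule.Quotient.mk_surjective p q1
    obtain ⟨m2, rfl⟩ := Submodule.Quotient.mk_surjective p q2
    have hq' : Submodule.Quotient.mk (p := p) (a • m1) =
        Submodule.Quotient.mk (p := p) (a • m2) := by
      simpa [Submodule.Quotient.mk_smul] using hq
    rw [Submodule.Quotient.eq] at hq'
    rw [Submodule.Quotient.eq]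
    have : a • (m1 - m2) ∈ p := by rwa [smul_sub]
    exact h _ this

lemma KH_zero_fin_subsingleton (x : Fin 0 → R) (j : ℕ) : Subsingleton (KH R M x j) := by
  rw [KH_subsingleton_iff]
  intro F hF
  have hF0 : F = 0 := Subsingleton.elim (α := KC R M 0 (j + 1))
    (h := KC_zero_subsingleton j) F 0
  exact ⟨0, by rw [map_zero, hF0]⟩

/-- Splitting of weak regularity for a `Fin (n+1)`-indexed sequence. -/
lemma isWeaklyRegular_ofFn_succ_iff (x : Fin (n + 1) → R) :
    IsWeaklyRegular M (List.ofFn x) ↔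
      IsWeaklyRegular M (List.ofFn (fun i => x i.castSucc)) ∧
        (∀ m : M, x (Fin.last n) • m ∈
            (Ideal.span (Set.range (fun i : Fin n => x i.castSucc)) • ⊤ : Submodule R M) →
          m ∈ (Ideal.span (Set.range (fun i : Fin n => x i.castSucc)) • ⊤ : Submodule R M)) := by
  rw [List.ofFn_succ', List.concat_eq_append, isWeaklyRegular_append_iff]
  rw [ofList_ofFn, isWeaklyRegular_singleton_iff, isSMulRegular_quotient_iff]

/-- Acyclicity: a weakly regular sequence has vanishing positive Koszul homology. -/
lemma koszul_acyclic_of_isWeaklyRegular :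
    ∀ (n : ℕ) (x : Fin n → R), IsWeaklyRegular M (List.ofFn x) →
      ∀ j, Subsingleton (KH R M x j) := by
  intro n
  induction n with
  | zero => intro x _ j; exact KH_zero_fin_subsingleton x j
  | succ n ih =>
    intro x hreg j
    obtain ⟨hx', hlast⟩ := (isWeaklyRegular_ofFn_succ_iff x).mp hreg
    set x' : Fin n → R := fun i => x i.castSucc with hx'def
    have hIH : ∀ j, Subsingleton (KH R M x' j) := ih x' hx'
    rw [KH_subsingleton_iff]
    intro F hF
    refine cycle_is_boundary x j ((KH_subsingleton_iff x' j).mp (hIH j)) F hF ?_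
    cases j with
    | zero =>
      -- use regularity of x_last on M / I'M
      have heq : kd R M x' 0 (phi 1 F) + x (Fin.last n) • psi 0 F = 0 := by
        have := congrArg (phi 0) hF
        rw [phi_kd, map_zero] at this
        rw [← this, pow_zero, one_zsmul]
      have hmem : x (Fin.last n) • ev (psi 0 F) ∈
          (Ideal.span (Set.range x') • ⊤ : Submodule R M) := by
        have h2 : x (Fin.last n) • psi 0 F = - kd R M x' 0 (phi 1 F) := by
          exact eq_neg_of_add_eq_zero_right heq
        have := congrArg ev h2
        rw [map_smul, map_neg] at this
        rw [this]
        exact neg_mem (ev_kd_mem x' (phi 1 F))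
      have := hlast _ hmem
      obtain ⟨u, hu⟩ := exists_kd_zero_eq (x := x') this
      exact ⟨u, hu⟩
    | succ j' =>
      -- psi is a cycle, use vanishing of H at degree j'
      have hcyc : kd R M x' j' (psi (j' + 1) F) = 0 := by
        rw [← psi_kd, hF, map_zero]
      exact (KH_subsingleton_iff x' j').mp (hIH j') _ hcyc

variable [IsNoetherianRing R] [IsLocalRing R] [Module.Finite R M]

/-- If `H_1(x; M) = 0` and the entries lie in the maximal ideal
then `x` is weakly regular. -/
lemma isWeaklyRegular_of_KH_zero_subsingleton :
    ∀ (n : ℕ) (x : Fin n → R), (∀ i, x i ∈ IsLocalRing.maximalIdeal R) →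
      Subsingleton (KH R M x 0) → IsWeaklyRegular M (List.ofFn x) := by
  intro n
  induction n with
  | zero =>
    intro x _ _
    rw [List.ofFn_zero]
    exact IsWeaklyRegular.nil R M
  | succ n ih =>
    intro x hmax hsub
    set x' : Fin n → R := fun i => x i.castSucc with hx'def
    have hcy := (KH_subsingleton_iff x 0).mp hsub
    -- Step A : H_1(x'; M) = x_last • H_1(x'; M), so it vanishes by Nakayama
    have hQ : Subsingleton (KH R M x' 0) := by
      set Q := KH R M x' 0 with hQdef
      have hle : (⊤ : Submodule R Q) ≤ Ideal.span {x (Fin.last n)} • ⊤ := by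
        intro q _
        obtain ⟨z, rfl⟩ := Submodule.Quotient.mk_surjective _ q
        obtain ⟨f, hf⟩ := z
        have hfc : kd R M x' 0 f = 0 := LinearMap.mem_ker.mp hf
        set F : KC R M (n + 1) 1 := bld 0 f 0 with hFdef
        have hFc : kd R M x 0 F = 0 := by
          apply phi_zero_inj
          rw [phi_kd, hFdef, phi_bld, psi_bld, hfc, smul_zero, smul_zero,
            add_zero, map_zero]
        obtain ⟨G, hG⟩ := hcy F hFc
        have hcomp1 : kd R M x' 1 (phi 2 G) +
            ((-1 : ℤ) ^ 1) • (x (Fin.last n) • psi 1 G) = f := by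
          have := congrArg (phi 1) hG
          rw [phi_kd] at this
          rw [this, hFdef, phi_bld]
        have hcomp2 : kd R M x' 0 (psi 1 G) = 0 := by
          have := congrArg (psi 0) hG
          rw [psi_kd] at this
          rw [this, hFdef, psi_bld]
        -- decompose the class
        set zb : LinearMap.ker (kd R M x' 0) :=
          ⟨kd R M x' 1 (phi 2 G), LinearMap.mem_ker.mpr (kd_kd x' 0 (phi 2 G))⟩ with hzb
        set zg : LinearMap.ker (kd R M x' 0) :=
          ⟨psi 1 G, LinearMap.mem_ker.mpr hcomp2⟩ with hzg
        have hzeq : (⟨f, hf⟩ : LinearMap.ker (kd R M x' 0)) =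
            zb + (-(x (Fin.last n))) • zg := by
          apply Subtype.ext
          show f = kd R M x' 1 (phi 2 G) + (-(x (Fin.last n))) • psi 1 G
          rw [← hcomp1, pow_one, neg_smul]
          norm_num
        rw [hzeq, Submodule.Quotient.mk_add, Submodule.Quotient.mk_smul]
        have hzb0 : Submodule.Quotient.mk
            (p := Submodule.comap (LinearMap.ker (kd R M x' 0)).subtype
              (LinearMap.range (kd R M x' 1))) zb = 0 := by
          rw [Submodule.Quotient.mk_eq_zero]
          exact ⟨phi 2 G, rfl⟩
        rw [hzb0]
        exact add_mem (Submodule.zero_mem _)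
          (Submodule.smul_mem_smul
            (neg_mem (Ideal.subset_span (Set.mem_singleton _))) Submodule.mem_top)
      have hfg : (⊤ : Submodule R Q).FG := Module.Finite.fg_top
      have hjac : Ideal.span {x (Fin.last n)} ≤ Ideal.jacobson ⊥ := by
        rw [IsLocalRing.jacobson_eq_maximalIdeal ⊥ bot_ne_top]
        rw [Ideal.span_le, Set.singleton_subset_iff]
        exact hmax (Fin.last n)
      have := Submodule.eq_bot_of_le_smul_of_le_jacobson_bot
        (Ideal.span {x (Fin.last n)}) ⊤ hfg hle hjac
      refine ⟨fun a b => ?_⟩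
      have ha : a ∈ (⊥ : Submodule R Q) := this ▸ Submodule.mem_top
      have hb : b ∈ (⊥ : Submodule R Q) := this ▸ Submodule.mem_top
      rw [Submodule.mem_bot] at ha hb
      rw [ha, hb]
    have hx' := ih x' (fun i => hmax i.castSucc) hQ
    -- Step B : x_last is regular mod I'M
    rw [isWeaklyRegular_ofFn_succ_iff]
    refine ⟨hx', fun m hm => ?_⟩
    set bm : KC R M n 0 := fun _ => m with hbm
    have hbmev : ev bm = m := rfl
    have hmem : ev (-(x (Fin.last n) • bm)) ∈
        (Ideal.span (Set.range x') • ⊤ : Submodule R M) := by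
      rw [map_neg, map_smul, hbmev]
      exact neg_mem hm
    obtain ⟨f, hfd⟩ := exists_kd_zero_eq (x := x') hmem
    set F : KC R M (n + 1) 1 := bld 0 f bm with hFdef
    have hFc : kd R M x 0 F = 0 := by
      apply phi_zero_inj
      rw [phi_kd, hFdef, phi_bld, psi_bld, hfd, pow_zero, one_zsmul, map_zero]
      abel
    obtain ⟨G, hG⟩ := hcy F hFc
    have hcomp2 : kd R M x' 0 (psi 1 G) = bm := by
      have := congrArg (psi 0) hG
      rw [psi_kd] at this
      rw [this, hFdef, psi_bld]
    have : ev (kd R M x' 0 (psi 1 G)) ∈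
        (Ideal.span (Set.range x') • ⊤ : Submodule R M) := ev_kd_mem x' (psi 1 G)
    rwa [hcomp2, hbmev] at this

end MainInduction

end KoszulInfra

section Lengths
variable {R : Type u} [CommRing R] {Q : Type v} [AddCommGroup Q] [Module R Q]

lemma nlen_eq_zero_of_subsingleton (h : Subsingleton Q) : nlen R Q = 0 := by
  have hU : Unique (Submodule R Q) := by
    refine ⟨⟨⊥⟩, fun a => ?_⟩
    ext m
    have : m = 0 := Subsingleton.elim _ _
    simp [this]
  rw [nlen, elen, Order.krullDim_eq_zero_of_unique]
  rfl

lemma chain_bound_prod {β : Type*} {γ : Type*} [PartialOrder β] [PartialOrder γ] {b c : ℕ}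
    (hb : ∀ p : LTSeries β, p.length ≤ b) (hc : ∀ p : LTSeries γ, p.length ≤ c)
    (p : LTSeries (β × γ)) : p.length ≤ b + c := by
  have hhb : ∀ y : β, Order.height y ≤ (b : ℕ∞) :=
    fun y => Order.height_le (fun q _ => by exact_mod_cast hb q)
  have hhc : ∀ y : γ, Order.height y ≤ (c : ℕ∞) :=
    fun y => Order.height_le (fun q _ => by exact_mod_cast hc q)
  set g : Fin (p.length + 1) → ℕ∞ :=
    fun i => Order.height (p i).1 + Order.height (p i).2 with hg
  have hgle : ∀ i, g i ≤ (b : ℕ∞) + (c : ℕ∞) := fun i => add_le_add (hhb _) (hhc _)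
  have hstep : ∀ i : Fin p.length, g i.castSucc < g i.succ := by
    intro i
    have hlt : p i.castSucc < p i.succ := p.step i
    rcases Prod.lt_iff.mp hlt with ⟨h1, h2⟩ | ⟨h1, h2⟩
    · have := Order.height_strictMono h1 (lt_of_le_of_lt (hhb _) (by exact WithTop.coe_lt_top b))
      exact WithTop.add_lt_add_of_lt_of_le (lt_of_le_of_lt (hhc _) (WithTop.coe_lt_top c)).ne
        this (Order.height_mono h2)
    · have := Order.height_strictMono h2 (lt_of_le_of_lt (hhc _) (by exact WithTop.coe_lt_top c))
      exact WithTop.add_lt_add_of_le_of_lt (lt_of_le_of_lt (hhb _) (WithTop.coe_lt_top b)).ne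
        (Order.height_mono h1) this
  have key : ∀ i : Fin (p.length + 1), (i : ℕ∞) ≤ g i := by
    intro i
    induction i using Fin.induction with
    | zero => simp
    | succ i ih =>
      have := hstep i
      have h2 := Order.add_one_le_of_lt this
      have hcast : ((i.succ : ℕ) : ℕ∞) = ((i.castSucc : ℕ) : ℕ∞) + 1 := by
        simp [Fin.val_succ, Fin.coe_castSucc]
      rw [hcast]
      exact le_trans (add_le_add_left ih 1) h2
  have hfin := le_trans (key (Fin.last _)) (hgle _)
  have : ((p.length : ℕ) : ℕ∞) ≤ ((b + c : ℕ) : ℕ∞) := by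
    simpa [Fin.val_last] using hfin
  exact_mod_cast this

end Lengths

section Lengths2
variable {R : Type u} [CommRing R]

lemma chain_bound_of_isFiniteLength {Q : Type v} [AddCommGroup Q] [Module R Q]
    (hfl : IsFiniteLength R Q) :
    ∃ n : ℕ, ∀ p : LTSeries (Submodule R Q), p.length ≤ n := by
  induction hfl with
  | @of_subsingleton Q iG iM iS =>
    refine ⟨0, fun p => ?_⟩
    by_contra hlen
    have h1 : 0 < p.length := by omega
    have hstep := p.step ⟨0, h1⟩
    have hsub : Subsingleton (Submodule R Q) := by
      constructor
      intro a b
      ext m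
      have : m = 0 := Subsingleton.elim _ _
      simp [this]
    exact absurd (Subsingleton.elim _ _) (ne_of_lt (show p.toFun _ < p.toFun _ from hstep))
  | @of_simple_quotient Q _ _ N _ hN ih =>
    obtain ⟨n, hn⟩ := ih
    refine ⟨n + 1, fun p => ?_⟩
    have hsimple : ∀ q : LTSeries (Submodule R (Q ⧸ N)), q.length ≤ 1 := by
      intro q
      by_contra hlen
      have h2 : 2 ≤ q.length := by omega
      have h01 : q ⟨0, by omega⟩ < q ⟨1, by omega⟩ := by
        have := q.strictMono (show (⟨0, by omega⟩ : Fin (q.length+1)) < ⟨1, by omega⟩ by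
          simp [Fin.lt_def])
        exact this
      have h12 : q ⟨1, by omega⟩ < q ⟨2, by omega⟩ := by
        have := q.strictMono (show (⟨1, by omega⟩ : Fin (q.length+1)) < ⟨2, by omega⟩ by
          simp [Fin.lt_def])
        exact this
      rcases eq_bot_or_eq_top (q ⟨1, by omega⟩) with h | h
      · rw [h] at h01; exact not_lt_bot h01
      · rw [h] at h12; exact not_top_lt h12
    -- map into product
    set F : Submodule R Q → Submodule R N × Submodule R (Q ⧸ N) :=
      fun P => (Submodule.comap N.subtype P, Submodule.map N.mkQ P) with hF
    have hmono : StrictMono F := by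
      intro P P' hPP'
      refine lt_of_le_of_ne ⟨Submodule.comap_mono hPP'.le, Submodule.map_mono hPP'.le⟩ ?_
      intro heq
      have h1 : N ⊓ P = N ⊓ P' := by
        have := congrArg (fun z => Submodule.map N.subtype z.1) heq
        simpa [hF, Submodule.map_comap_subtype] using this
      have h2 : N ⊔ P = N ⊔ P' := by
        have := congrArg (fun z => Submodule.comap N.mkQ z.2) heq
        simpa [hF, Submodule.comap_map_mkQ] using this
      have := sup_lt_sup_of_lt_of_inf_le_inf hPP'
        (le_of_eq (by rw [inf_comm P' N, ← h1, inf_comm N P]))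
      rw [sup_comm P N, sup_comm P' N, h2] at this
      exact lt_irrefl _ this
    exact chain_bound_prod hn hsimple (p.map F hmono)

lemma subsingleton_of_nlen_eq_zero {Q : Type v} [AddCommGroup Q] [Module R Q]
    (hfl : IsFiniteLength R Q) (h : nlen R Q = 0) : Subsingleton Q := by
  by_contra hns
  have hnt : Nontrivial Q := not_subsingleton_iff_nontrivial.mp hns
  obtain ⟨n, hn⟩ := chain_bound_of_isFiniteLength hfl
  have hbot : (⊥ : Submodule R Q) < ⊤ := bot_lt_top
  set p : LTSeries (Submodule R Q) := RelSeries.fromListIsChain [⊥, ⊤] (by simp)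
    (List.isChain_pair.mpr hbot) with hp
  have h1 : (1 : WithBot ℕ∞) ≤ Order.krullDim (Submodule R Q) := by
    have := Order.LTSeries.length_le_krullDim p
    simpa [hp, RelSeries.fromListIsChain] using this
  have h2 : Order.krullDim (Submodule R Q) ≤ ((n : ℕ∞) : WithBot ℕ∞) := by
    rw [Order.krullDim_eq_iSup_length, WithBot.coe_le_coe]
    exact iSup_le fun q => by exact_mod_cast hn q
  have hne : Order.krullDim (Submodule R Q) ≠ ⊥ := by
    intro hb
    rw [hb] at h1
    exact absurd h1 (by simp)
  obtain ⟨e, he⟩ := WithBot.ne_bot_iff_exists.mp hne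
  rw [← he] at h1 h2
  have he1 : (1 : ℕ∞) ≤ e := by exact_mod_cast h1
  have he2 : e ≤ (n : ℕ∞) := by exact_mod_cast h2
  rw [nlen, ENat.toNat_eq_zero, elen, ← he] at h
  simp only [WithBot.unbotD_coe] at h
  rcases h with h | h
  · rw [h] at he1; exact absurd he1 (by norm_num)
  · rw [h] at he2
    exact absurd he2 (by simp)
end Lengths2

section Combo
lemma combo_vanish {r : ℕ} (h : ℕ → ℤ)
    (hj : ∀ i, 1 ≤ i → i ≤ r →
      (∑ k ∈ Finset.Icc i r, (-1) ^ k * h k * (k.choose i : ℤ)) = 0) :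
    ∀ k, 1 ≤ k → k ≤ r → h k = 0 := by
  suffices H : ∀ m k, r - k = m → 1 ≤ k → k ≤ r → h k = 0 by
    intro k h1 h2; exact H (r - k) k rfl h1 h2
  intro m
  induction m using Nat.strong_induction_on with
  | _ m ih =>
    intro k hm h1 hk
    have hz : ∀ j, k < j → j ≤ r → h j = 0 := fun j hj1 hj2 =>
      ih (r - j) (by omega) j (by omega) (by omega) hj2
    have hsum := hj k h1 hk
    rw [Finset.sum_eq_single k] at hsum
    · have hne : ((-1 : ℤ)) ^ k ≠ 0 := by positivity
      simp only [Nat.choose_self, Nat.cast_one, mul_one] at hsum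
      rcases mul_eq_zero.mp hsum with hc | hc
      · exact absurd hc hne
      · exact hc
    · intro b hb hbk
      obtain ⟨hb1, hb2⟩ := Finset.mem_Icc.mp hb
      rw [hz b (lt_of_le_of_ne hb1 (Ne.symm hbk)) hb2]
      ring
    · intro hk'
      exact absurd (Finset.mem_Icc.mpr ⟨le_refl k, hk⟩) hk'
end Combo

section RingFacts
variable {R : Type u} [CommRing R]

lemma nontrivial_of_mdim_ne_bot {Q : Type v} [AddCommGroup Q] [Module R Q]
    (h : mdim R Q ≠ ⊥) : Nontrivial Q := by
  by_contra hns
  have hsub : Subsingleton Q := not_nontrivial_iff_subsingleton.mp hns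
  have hann : Module.annihilator R Q = ⊤ := by
    rw [Ideal.eq_top_iff_one, Module.mem_annihilator]
    intro m
    exact Subsingleton.elim _ _
  have : Subsingleton (R ⧸ Module.annihilator R Q) := by
    rw [hann]
    exact (Submodule.Quotient.subsingleton_iff).mpr rfl
  exact h (by rw [mdim]; exact ringKrullDim_eq_bot_of_subsingleton)
end RingFacts

theorem isRegular_iff_jCoefficients_vanish (R : Type u) [CommRing R] [IsNoetherianRing R] [IsLocalRing R]
    (M : Type u) [AddCommGroup M] [Module R M] [Module.Finite R M]
    {d r : ℕ} (hd : 0 < d) (hdim : mdim R M = (d : WithBot ℕ∞)) (hr : r ≤ d)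
    (x : Fin r → R) (hpsop : IsPartialSOP R M x) (ham : IsAmenable R M x) (hds : IsDSeq M x)
    (I : Ideal R) (hI : I = Ideal.span (Set.range x)) :
    ∀ h : ℕ → ℤ,
      h 0 = (nlen R ↥(tor R (IsLocalRing.maximalIdeal R) (M ⧸ (I • ⊤ : Submodule R M))) : ℤ) →
      (∀ k : ℕ, h (k + 1) = (nlen R (KH R M x k) : ℤ)) →
      (RingTheory.Sequence.IsRegular M (List.ofFn x) ↔
        ∀ i : ℕ, 1 ≤ i → i ≤ r →
          (∑ k ∈ Finset.Icc i r, (-1) ^ k * h k * (k.choose i : ℤ)) = 0) := by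
  subst hI
  intro h h0 hh
  have hquot_nt : Nontrivial (M ⧸ (Ideal.span (Set.range x) • ⊤ : Submodule R M)) := by
    apply nontrivial_of_mdim_ne_bot (R := R)
    intro hb
    rw [IsPartialSOP, hb, WithBot.add_bot, hdim] at hpsop
    exact WithBot.coe_ne_bot hpsop
  have hntM : Nontrivial M :=
    nontrivial_of_mdim_ne_bot (R := R) (by rw [hdim]; exact WithBot.coe_ne_bot)
  have hmax : ∀ i, x i ∈ IsLocalRing.maximalIdeal R := by
    intro i
    by_contra hnm
    rw [IsLocalRing.mem_maximalIdeal, mem_nonunits_iff, not_not] at hnm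
    have htop : Ideal.span (Set.range x) = ⊤ :=
      Ideal.eq_top_of_isUnit_mem _ (Ideal.subset_span ⟨i, rfl⟩) hnm
    have hsub : Subsingleton (M ⧸ (Ideal.span (Set.range x) • ⊤ : Submodule R M)) := by
      rw [Submodule.Quotient.subsingleton_iff, htop, Submodule.top_smul]
    exact (not_subsingleton_iff_nontrivial.mpr hquot_nt) hsub
  constructor
  · intro hreg i hi1 hir
    have hKH := koszul_acyclic_of_isWeaklyRegular r x hreg.toIsWeaklyRegular
    refine Finset.sum_eq_zero fun k hk => ?_
    obtain ⟨hk1, hk2⟩ := Finset.mem_Icc.mp hk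
    obtain ⟨k', rfl⟩ : ∃ k', k = k' + 1 := ⟨k - 1, by omega⟩
    rw [hh k', nlen_eq_zero_of_subsingleton (hKH k')]
    push_cast
    ring
  · intro hj
    have hz := combo_vanish h hj
    have hKH0 : Subsingleton (KH R M x 0) := by
      rcases Nat.eq_zero_or_pos r with hr0 | hrpos
      · subst hr0
        exact KH_zero_fin_subsingleton x 0
      · have h1 := hz 1 le_rfl hrpos
        rw [hh 0] at h1
        exact subsingleton_of_nlen_eq_zero (ham 0) (by exact_mod_cast h1)
    have hw := isWeaklyRegular_of_KH_zero_subsingleton r x hmax hKH0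
    rw [IsLocalRing.isRegular_iff_isWeaklyRegular_of_subset_maximalIdeal ?_]
    · exact hw
    · intro a ha
      obtain ⟨i, rfl⟩ := List.mem_ofFn.mp ha
      exact hmax i
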